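/- Let P and Q be posets on [n] with P < Q (P ≤ Q and P ≠ Q). Then there exists a linear code C ⊆ F_q^n and a primary Q-decomposition of C whose induced pointed partition of [n] is, after applying some bijection of [n], a strict refinement of the pointed partition induced by a primary P-decomposition of C. -/
import Mathlib


/-- `I` is an ideal of the poset `P` on `[n]`. -/
def IsPosetIdeal {n : ℕ} (P : PartialOrder (Fin n)) (I : Set (Fin n)) : Prop :=
  ∀ i ∈ I, ∀ j, P.le j i → j ∈ I

/-- The smallest ideal of `P` containing `X`. -/
def idealGen {n : ℕ} (P : PartialOrder (Fin n)) (X : Set (Fin n)) : Set (Fin n) :=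
  ⋂₀ {I | IsPosetIdeal P I ∧ X ⊆ I}

/-- The `P`-weight `ω_P(x) = |⟨supp(x)⟩|`. -/
noncomputable def posetWeight {F : Type*} [Field F] {n : ℕ} (P : PartialOrder (Fin n))
    (x : Fin n → F) : ℕ :=
  (idealGen P {i | x i ≠ 0}).ncard

/-- The `P`-distance `d_P(x,y) = ω_P(x - y)`. -/
noncomputable def posetDist {F : Type*} [Field F] {n : ℕ} (P : PartialOrder (Fin n))
    (x y : Fin n → F) : ℕ :=
  posetWeight P (x - y)

/-- A linear `P`-isometry of `F_q^n`. -/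
def IsPIsometry {F : Type*} [Field F] {n : ℕ} (P : PartialOrder (Fin n))
    (T : (Fin n → F) ≃ₗ[F] (Fin n → F)) : Prop :=
  ∀ x y, posetDist P (T x) (T y) = posetDist P x y

/-- The support of a subspace `D ⊆ F_q^n`. -/
def suppS {F : Type*} [Field F] {n : ℕ} (D : Submodule F (Fin n → F)) : Set (Fin n) :=
  {j | ∃ x ∈ D, x j ≠ 0}

/-- `C_0`: the subspace of all vectors vanishing on the support of `C`. -/
def coSupp {F : Type*} [Field F] {n : ℕ} (C : Submodule F (Fin n → F)) :
    Submodule F (Fin n → F) where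
  carrier := {x | ∀ j ∈ suppS C, x j = 0}
  add_mem' := by
    intro a b ha hb j hj
    simp only [Set.mem_setOf_eq] at ha hb ⊢
    rw [Pi.add_apply, ha j hj, hb j hj, add_zero]
  zero_mem' := by intro j _; rfl
  smul_mem' := by
    intro c a ha j hj
    simp only [Set.mem_setOf_eq] at ha ⊢
    rw [Pi.smul_apply, ha j hj, smul_zero]

/-- A decomposition `(C; C_0; C_1, …, C_r)` of a linear code `C ⊆ F_q^n`:
nonzero subspaces `C_1, …, C_r` with pairwise disjoint supports whose internal
direct sum is `C`.  (The distinguished part `C_0 = coSupp C` is determined by `C`.) -/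
structure Decomposition {F : Type*} [Field F] {n : ℕ} (C : Submodule F (Fin n → F)) where
  r : ℕ
  D : Fin r → Submodule F (Fin n → F)
  ne_bot : ∀ i, D i ≠ ⊥
  indep : iSupIndep D
  sup_eq : ⨆ i, D i = C
  disj : Pairwise fun i j => Disjoint (suppS (D i)) (suppS (D j))

/-- A `P`-decomposition of `C`: a decomposition of a code `C'` that is
`P`-equivalent to `C`. -/
structure PDecomposition {F : Type*} [Field F] {n : ℕ} (P : PartialOrder (Fin n))
    (C : Submodule F (Fin n → F)) where
  C' : Submodule F (Fin n → F)
  T : (Fin n → F) ≃ₗ[F] (Fin n → F)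
  isom : IsPIsometry P T
  image : Submodule.map (T : (Fin n → F) →ₗ[F] (Fin n → F)) C = C'
  dec : Decomposition C'

/-- A trivial `P`-decomposition of `C`: a single component, with
`|supp(C')| = |supp(C)|` and `|supp(C'_0)| = |supp(C_0)|`. -/
def PDecomposition.IsTrivial {F : Type*} [Field F] {n : ℕ} {P : PartialOrder (Fin n)}
    {C : Submodule F (Fin n → F)} (d : PDecomposition P C) : Prop :=
  d.dec.r = 1 ∧ (suppS d.C').ncard = (suppS C).ncard ∧
    (suppS (coSupp d.C')).ncard = (suppS (coSupp C)).ncard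

/-- A code is `P`-irreducible if it admits no non-trivial `P`-decomposition. -/
def PIrreducible {F : Type*} [Field F] {n : ℕ} (P : PartialOrder (Fin n))
    (C : Submodule F (Fin n → F)) : Prop :=
  ∀ d : PDecomposition P C, d.IsTrivial

/-- A `P`-decomposition is maximal if each of its components is `P`-irreducible. -/
def PDecomposition.IsMaximal {F : Type*} [Field F] {n : ℕ} {P : PartialOrder (Fin n)}
    {C : Submodule F (Fin n → F)} (d : PDecomposition P C) : Prop :=
  ∀ i, PIrreducible P (d.dec.D i)

/-- The complexity of a `P`-decomposition: `Σ_{i=1}^r q^{n_i - k_i}` where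
`n_i = |supp(C'_i)|` and `k_i = dim C'_i`. -/
noncomputable def PDecomposition.complexity {F : Type*} [Field F] [Fintype F] {n : ℕ}
    {P : PartialOrder (Fin n)} {C : Submodule F (Fin n → F)}
    (d : PDecomposition P C) : ℕ :=
  ∑ i, (Fintype.card F) ^ ((suppS (d.dec.D i)).ncard - Module.finrank F (d.dec.D i))

/-- A `P`-decomposition of `C` is primary if its complexity is minimal among all
`P`-decompositions of `C`. -/
def PDecomposition.IsPrimary {F : Type*} [Field F] [Fintype F] {n : ℕ}
    {P : PartialOrder (Fin n)} {C : Submodule F (Fin n → F)}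
    (d : PDecomposition P C) : Prop :=
  ∀ d' : PDecomposition P C, d.complexity ≤ d'.complexity

/-- `O_P(C)`: the minimal complexity among all `P`-decompositions of `C`. -/
noncomputable def minComplexity {F : Type*} [Field F] [Fintype F] {n : ℕ}
    (P : PartialOrder (Fin n)) (C : Submodule F (Fin n → F)) : ℕ :=
  sInf {m | ∃ d : PDecomposition P C, d.complexity = m}

/-- A pointed partition `(J_0; J_1, …, J_r)` of `[n]`: pairwise disjoint parts
covering `[n]`, where only the distinguished part `J0` may be empty.  Since the
parts `J_1, …, J_r` are nonempty and pairwise disjoint (hence pairwise distinct,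
their order being irrelevant), they are recorded as a finite set of finsets. -/
structure PointedPartition (n : ℕ) where
  J0 : Finset (Fin n)
  parts : Finset (Finset (Fin n))
  nonempty : ∀ J ∈ parts, J.Nonempty
  disj0 : ∀ J ∈ parts, Disjoint J0 J
  disj : ∀ J ∈ parts, ∀ K ∈ parts, J ≠ K → Disjoint J K
  cover : J0 ∪ parts.sup id = Finset.univ

/-- A 1-step refinement `Q` of `Pp`: either split one part into two nonempty parts
(an `l`-split), or move a nonempty proper subset of one part into the
distinguished part `J0` (an `l`-aggregate). -/
def OneStepRefinement {n : ℕ} (Q Pp : PointedPartition n) : Prop :=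
  (∃ A ∈ Pp.parts, ∃ B C : Finset (Fin n), B.Nonempty ∧ C.Nonempty ∧
      Disjoint B C ∧ B ∪ C = A ∧ Q.J0 = Pp.J0 ∧
      Q.parts = insert B (insert C (Pp.parts.erase A))) ∨
  (∃ A ∈ Pp.parts, ∃ B : Finset (Fin n), B.Nonempty ∧ B ⊂ A ∧
      Q.J0 = Pp.J0 ∪ B ∧ Q.parts = insert (A \ B) (Pp.parts.erase A))

/-- `Q` is a strict refinement of `Pp` if it is obtained from `Pp` by finitely
many 1-step refinements, at least one occurring. -/
def StrictRefines {n : ℕ} (Q Pp : PointedPartition n) : Prop :=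
  Relation.TransGen OneStepRefinement Q Pp

/-- The pointed partition of `[n]` induced by a decomposition of a code `C`:
the distinguished part is `[n] \ supp(C)` and the other parts are the supports
of the components. -/
def IsInducedPartition {F : Type*} [Field F] {n : ℕ} {C : Submodule F (Fin n → F)}
    (d : Decomposition C) (pp : PointedPartition n) : Prop :=
  (↑pp.J0 : Set (Fin n)) = (suppS C)ᶜ ∧
  ∀ s : Finset (Fin n), s ∈ pp.parts ↔ ∃ i, (↑s : Set (Fin n)) = suppS (d.D i)


section Aux

variable {F : Type*} [Field F] {n : ℕ}

lemma subset_idealGen (P : PartialOrder (Fin n)) (X : Set (Fin n)) : X ⊆ idealGen P X := by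
  intro x hx
  simp only [idealGen, Set.mem_sInter, Set.mem_setOf_eq]
  exact fun I hI => hI.2 hx

lemma idealGen_subset (P : PartialOrder (Fin n)) {X I : Set (Fin n)}
    (hI : IsPosetIdeal P I) (hXI : X ⊆ I) : idealGen P X ⊆ I :=
  Set.sInter_subset_of_mem ⟨hI, hXI⟩

lemma isPosetIdeal_idealGen (P : PartialOrder (Fin n)) (X : Set (Fin n)) :
    IsPosetIdeal P (idealGen P X) := by
  intro a ha b hba
  simp only [idealGen, Set.mem_sInter, Set.mem_setOf_eq] at ha ⊢
  exact fun I hI => hI.1 a (ha I hI) b hba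

lemma idealGen_mono (P : PartialOrder (Fin n)) {X Y : Set (Fin n)} (h : X ⊆ Y) :
    idealGen P X ⊆ idealGen P Y :=
  idealGen_subset P (isPosetIdeal_idealGen P Y) (h.trans (subset_idealGen P Y))

lemma IsPIsometry.weight {P : PartialOrder (Fin n)} {T : (Fin n → F) ≃ₗ[F] (Fin n → F)}
    (h : IsPIsometry P T) (z : Fin n → F) : posetWeight P (T z) = posetWeight P z := by
  have := h z 0
  simpa [posetDist, map_zero, sub_zero] using this

lemma supp_single (i : Fin n) : {t : Fin n | (Pi.single i 1 : Fin n → F) t ≠ 0} = {i} := by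
  ext t
  simp only [Set.mem_setOf_eq, Set.mem_singleton_iff, Pi.single_apply]
  split_ifs with h <;> simp [h]

lemma supp_pair {i j : Fin n} (hij : i ≠ j) :
    {t : Fin n | ((Pi.single i 1 : Fin n → F) + (Pi.single j 1 : Fin n → F)) t ≠ 0} = {i, j} := by
  ext t
  simp only [Set.mem_setOf_eq, Pi.add_apply, Pi.single_apply, Set.mem_insert_iff,
    Set.mem_singleton_iff]
  rcases eq_or_ne t i with rfl | h1
  · simp [hij]
  · rcases eq_or_ne t j with rfl | h2
    · simp [h1]
    · simp [h1, h2]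

lemma suppS_span_singleton (v : Fin n → F) :
    suppS (Submodule.span F {v}) = {t | v t ≠ 0} := by
  ext t
  constructor
  · rintro ⟨x, hx, hxt⟩
    obtain ⟨c, rfl⟩ := Submodule.mem_span_singleton.mp hx
    intro hv
    simp [hv] at hxt
  · intro hv
    exact ⟨v, Submodule.mem_span_singleton_self v, hv⟩

/-- The one-component decomposition of a nonzero code. -/
def singleDec (C : Submodule F (Fin n → F)) (hC : C ≠ ⊥) : Decomposition C where
  r := 1
  D := fun _ => C
  ne_bot := fun _ => hC
  indep := by
    intro i
    have hb : (⨆ j, ⨆ (_ : j ≠ i), (fun _ : Fin 1 => C) j) = ⊥ :=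
      le_bot_iff.mp (iSup_le fun j => iSup_le fun hj => absurd (Subsingleton.elim j i) hj)
    rw [hb]
    exact disjoint_bot_right
  sup_eq := iSup_const
  disj := fun {a b} hab => absurd (Subsingleton.elim a b) hab

/-- The identity `P`-decomposition. -/
def idPDec (P : PartialOrder (Fin n)) (C : Submodule F (Fin n → F)) (hC : C ≠ ⊥) :
    PDecomposition P C where
  C' := C
  T := LinearEquiv.refl F _
  isom := fun _ _ => rfl
  image := by simp
  dec := singleDec C hC

/-- The shear map `x ↦ x - x j • e_i`. -/
def shear (i j : Fin n) (hij : i ≠ j) : (Fin n → F) ≃ₗ[F] (Fin n → F) where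
  toFun x := x - x j • (Pi.single i 1 : Fin n → F)
  invFun x := x + x j • (Pi.single i 1 : Fin n → F)
  map_add' a b := by
    ext t
    simp only [Pi.add_apply, Pi.sub_apply, Pi.smul_apply, smul_eq_mul]
    ring
  map_smul' c a := by
    ext t
    simp only [Pi.smul_apply, Pi.sub_apply, smul_eq_mul, RingHom.id_apply]
    ring
  left_inv x := by
    have h0 : (Pi.single i 1 : Fin n → F) j = 0 := Pi.single_eq_of_ne (Ne.symm hij) 1
    simp [h0]
  right_inv x := by
    have h0 : (Pi.single i 1 : Fin n → F) j = 0 := Pi.single_eq_of_ne (Ne.symm hij) 1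
    simp [h0]

lemma shear_apply (i j : Fin n) (hij : i ≠ j) (x : Fin n → F) :
    shear i j hij x = x - x j • (Pi.single i 1 : Fin n → F) := rfl

lemma shear_idealGen (Qp : PartialOrder (Fin n)) {i j : Fin n} (hij : i ≠ j)
    (hle : Qp.le i j) (z : Fin n → F) :
    idealGen Qp {t | (z - z j • (Pi.single i 1 : Fin n → F)) t ≠ 0} = idealGen Qp {t | z t ≠ 0} := by
  have hval : ∀ t, t ≠ i → (z - z j • (Pi.single i 1 : Fin n → F)) t = z t := by
    intro t ht
    simp [Pi.single_eq_of_ne ht]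
  have hvi : (z - z j • (Pi.single i 1 : Fin n → F)) i = z i - z j := by
    simp [Pi.single_eq_same]
  have hvj : (z - z j • (Pi.single i 1 : Fin n → F)) j = z j := hval j (Ne.symm hij)
  apply subset_antisymm
  · apply idealGen_subset Qp (isPosetIdeal_idealGen Qp _)
    intro t ht
    simp only [Set.mem_setOf_eq] at ht
    rcases eq_or_ne t i with rfl | hti
    · by_cases hzj : z j = 0
      · have hz : z t ≠ 0 := by rwa [hvi, hzj, sub_zero] at ht
        exact subset_idealGen Qp _ hz
      · exact isPosetIdeal_idealGen Qp _ j (subset_idealGen Qp _ hzj) t hle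
    · exact subset_idealGen Qp _ (show z t ≠ 0 by rwa [hval t hti] at ht)
  · apply idealGen_subset Qp (isPosetIdeal_idealGen Qp _)
    intro t ht
    simp only [Set.mem_setOf_eq] at ht
    rcases eq_or_ne t i with rfl | hti
    · by_cases hzj : z j = 0
      · have hz : (z - z j • (Pi.single t 1 : Fin n → F)) t ≠ 0 := by rw [hvi, hzj, sub_zero]; exact ht
        exact subset_idealGen Qp _ hz
      · have hj' : (z - z j • (Pi.single t 1 : Fin n → F)) j ≠ 0 := by rwa [hvj]
        exact isPosetIdeal_idealGen Qp _ j (subset_idealGen Qp _ hj') t hle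
    · exact subset_idealGen Qp _ (show (z - z j • (Pi.single i 1 : Fin n → F)) t ≠ 0 by rwa [hval t hti])

lemma shear_isometry (Qp : PartialOrder (Fin n)) {i j : Fin n} (hij : i ≠ j)
    (hle : Qp.le i j) : IsPIsometry Qp (shear (F := F) i j hij) := by
  intro x y
  rw [posetDist, posetDist, ← map_sub, shear_apply]
  unfold posetWeight
  rw [shear_idealGen Qp hij hle]

end Aux

lemma span_pdec_facts {F : Type*} [Field F] [Fintype F] {n : ℕ} {Pp : PartialOrder (Fin n)}
    {v : Fin n → F} (hv : v ≠ 0) (d : PDecomposition Pp (Submodule.span F {v})) :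
    d.complexity = Fintype.card F ^ ((suppS d.C').ncard - 1) ∧
      d.C' = Submodule.span F {d.T v} := by
  have hC' : d.C' = Submodule.span F {d.T v} := by
    rw [← d.image, Submodule.map_span, Set.image_singleton]
    rfl
  have hTv : d.T v ≠ 0 := fun h => hv (by simpa using congrArg d.T.symm h)
  -- every component index: first r ≥ 1
  have hr1 : 1 ≤ d.dec.r := by
    rcases Nat.eq_zero_or_pos d.dec.r with h0 | h1
    · exfalso
      have hemp : IsEmpty (Fin d.dec.r) := by rw [h0]; infer_instance
      have := d.dec.sup_eq
      rw [@iSup_of_empty _ _ _ hemp] at this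
      have hmem : d.T v ∈ d.C' := hC' ▸ Submodule.mem_span_singleton_self _
      rw [← this] at hmem
      exact hTv (by simpa using hmem)
    · exact h1
  have hr2 : d.dec.r ≤ 1 := by
    by_contra h
    push_neg at h
    set i0 : Fin d.dec.r := ⟨0, by omega⟩ with hi0
    set i1 : Fin d.dec.r := ⟨1, by omega⟩ with hi1
    have hne01 : i0 ≠ i1 := by
      rw [hi0, hi1]
      simp [Fin.ext_iff]
    obtain ⟨x, hx, hx0⟩ := Submodule.ne_bot_iff _ |>.mp (d.dec.ne_bot i0)
    obtain ⟨y, hy, hy0⟩ := Submodule.ne_bot_iff _ |>.mp (d.dec.ne_bot i1)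
    have hxC : x ∈ d.C' := by
      rw [← d.dec.sup_eq]; exact le_iSup d.dec.D i0 hx
    have hyC : y ∈ d.C' := by
      rw [← d.dec.sup_eq]; exact le_iSup d.dec.D i1 hy
    rw [hC'] at hxC hyC
    obtain ⟨a, rfl⟩ := Submodule.mem_span_singleton.mp hxC
    obtain ⟨b, rfl⟩ := Submodule.mem_span_singleton.mp hyC
    have ha : a ≠ 0 := fun h => hx0 (by simp [h])
    have hb : b ≠ 0 := fun h => hy0 (by simp [h])
    have hxy : a • d.T v = (a * b⁻¹) • (b • d.T v) := by
      rw [smul_smul, mul_assoc, inv_mul_cancel₀ hb, mul_one]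
    have hxin : a • d.T v ∈ d.dec.D i1 := hxy ▸ Submodule.smul_mem _ _ hy
    have hdisj := (d.dec.indep.pairwiseDisjoint hne01)
    exact hx0 (Submodule.disjoint_def.mp hdisj _ hx hxin)
  have hr : d.dec.r = 1 := le_antisymm hr2 hr1
  -- all components equal C'
  have hDeq : ∀ i : Fin d.dec.r, d.dec.D i = d.C' := by
    intro i
    apply le_antisymm
    · exact le_trans (le_iSup d.dec.D i) (le_of_eq d.dec.sup_eq)
    · refine le_trans (le_of_eq d.dec.sup_eq.symm) (iSup_le fun jj => ?_)
      have hji : jj = i := Fin.ext (by have h1 := jj.isLt; have h2 := i.isLt; omega)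
      exact le_of_eq (congrArg d.dec.D hji)
  have hfr : Module.finrank F d.C' = 1 := by
    rw [hC']
    exact finrank_span_singleton hTv
  constructor
  · unfold PDecomposition.complexity
    have : ∀ i : Fin d.dec.r,
        (Fintype.card F) ^ ((suppS (d.dec.D i)).ncard - Module.finrank F (d.dec.D i)) =
        (Fintype.card F) ^ ((suppS d.C').ncard - 1) := by
      intro i
      rw [hDeq i, hfr]
    rw [Finset.sum_congr rfl (fun i _ => this i), Finset.sum_const, Finset.card_univ,
      Fintype.card_fin, hr, one_smul]
  · exact hC'
/-- **Proposition 2.** If `P < Q`, then there is a linear code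
`C ⊆ F_q^n` and a primary `Q`-decomposition of `C` whose induced pointed
partition of `[n]` is, after applying some bijection of `[n]`, a strict
refinement of the pointed partition induced by a primary `P`-decomposition
of `C`. -/
theorem exists_code_strictly_finer {F : Type*} [Field F] [Fintype F] {n : ℕ}
    (P Q : PartialOrder (Fin n)) (hPQ : ∀ i j : Fin n, P.le i j → Q.le i j)
    (hne : P ≠ Q) :
    ∃ (C : Submodule F (Fin n → F)) (dQ : PDecomposition Q C)
      (dP : PDecomposition P C), dQ.IsPrimary ∧ dP.IsPrimary ∧
      ∃ (pq pp pq' : PointedPartition n) (φ : Equiv.Perm (Fin n)),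
        IsInducedPartition dQ.dec pq ∧ IsInducedPartition dP.dec pp ∧
        pq'.J0 = pq.J0.image φ ∧
        pq'.parts = pq.parts.image (fun s => s.image φ) ∧
        StrictRefines pq' pp := by
  classical
  -- find a pair related in Q but not in P
  have hex : ∃ i j : Fin n, Q.le i j ∧ ¬ P.le i j := by
    by_contra h
    push_neg at h
    exact hne (PartialOrder.ext fun a b => ⟨hPQ a b, h a b⟩)
  obtain ⟨i, j, hQij, hPij⟩ := hex
  have hij : i ≠ j := fun h => hPij (h ▸ P.le_refl i)
  have hPji : ¬ P.le j i := fun h => hij (Q.le_antisymm i j hQij (hPQ j i h))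
  set ei : Fin n → F := Pi.single i 1 with hei
  set ej : Fin n → F := Pi.single j 1 with hejdef
  set v : Fin n → F := ei + ej with hv
  have hvne : v ≠ 0 := by
    intro h
    have h2 := congrFun h i
    rw [hv, hei, hejdef] at h2
    simp [Pi.single_eq_same, Pi.single_eq_of_ne hij] at h2
  have hejne : ej ≠ 0 := by
    intro h
    have h2 := congrFun h j
    rw [hejdef] at h2
    simp [Pi.single_eq_same] at h2
  set C : Submodule F (Fin n → F) := Submodule.span F {v} with hC
  have hCne : C ≠ ⊥ :=
    Submodule.ne_bot_iff _ |>.mpr ⟨v, Submodule.mem_span_singleton_self v, hvne⟩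
  set Cj : Submodule F (Fin n → F) := Submodule.span F {ej} with hCj
  have hCjne : Cj ≠ ⊥ :=
    Submodule.ne_bot_iff _ |>.mpr ⟨ej, Submodule.mem_span_singleton_self ej, hejne⟩
  -- the shear maps C onto Cj
  have hshearv : shear i j hij v = ej := by
    rw [shear_apply]
    have h1 : v j = 1 := by
      rw [hv, hei, hejdef]
      simp [Pi.single_eq_same, Pi.single_eq_of_ne (Ne.symm hij)]
    rw [h1, one_smul, hv, ← hei]
    abel
  have himage : Submodule.map ((shear i j hij : (Fin n → F) ≃ₗ[F] (Fin n → F)) :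
      (Fin n → F) →ₗ[F] (Fin n → F)) C = Cj := by
    rw [hC, Submodule.map_span, Set.image_singleton, hCj]
    congr 1
    rw [Set.singleton_eq_singleton_iff]
    exact hshearv
  -- supports
  have hsuppC : suppS C = {i, j} := by
    rw [hC, suppS_span_singleton, hv, hei, hejdef, supp_pair hij]
  have hsuppCj : suppS Cj = {j} := by
    rw [hCj, suppS_span_singleton, hejdef, supp_single]
  refine ⟨C, ⟨Cj, shear i j hij, shear_isometry Q hij hQij, himage, singleDec Cj hCjne⟩,
          idPDec P C hCne, ?_, ?_, ?_⟩
  · -- primality of the Q-decomposition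
    intro d'
    have hfacts := span_pdec_facts hvne d'
    have hmy := span_pdec_facts (Pp := Q) hvne
      ⟨Cj, shear i j hij, shear_isometry Q hij hQij, himage, singleDec Cj hCjne⟩
    rw [hmy.1, hfacts.1]
    have h1 : (suppS Cj).ncard = 1 := by rw [hsuppCj]; exact Set.ncard_singleton j
    show Fintype.card F ^ ((suppS Cj).ncard - 1) ≤ _
    rw [h1]
    simpa using Nat.one_le_pow _ _ Fintype.card_pos
  · -- primality of the P-decomposition
    intro d'
    have hfacts := span_pdec_facts hvne d'
    have hmy := span_pdec_facts (Pp := P) hvne (idPDec P C hCne)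
    rw [hmy.1, hfacts.1]
    have h2 : (suppS C).ncard = 2 := by rw [hsuppC]; exact Set.ncard_pair hij
    show Fintype.card F ^ ((suppS C).ncard - 1) ≤ _
    rw [h2]
    -- it suffices to show 2 ≤ |supp(C'')|
    have hs2 : 2 ≤ (suppS d'.C').ncard := by
      by_contra hcon
      push_neg at hcon
      set w : Fin n → F := d'.T v with hw
      have hwne : w ≠ 0 := by
        intro h
        rw [hw] at h
        exact hvne (by simpa using congrArg d'.T.symm h)
      have hsw : suppS d'.C' = {t | w t ≠ 0} := by
        rw [hfacts.2, suppS_span_singleton]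
      have hnonempty : {t | w t ≠ 0}.Nonempty := by
        obtain ⟨t, ht⟩ := Function.ne_iff.mp hwne
        exact ⟨t, ht⟩
      have hpos : 1 ≤ (suppS d'.C').ncard := by
        rw [hsw]
        exact (Set.ncard_pos (Set.toFinite _)).mpr hnonempty
      have hone : (suppS d'.C').ncard = 1 :=
        Nat.le_antisymm (Nat.lt_succ_iff.mp hcon) hpos
      rw [hsw] at hone
      obtain ⟨k, hk⟩ := Set.ncard_eq_one.mp hone
      -- weight bookkeeping
      have hwt := IsPIsometry.weight d'.isom
      set m : ℕ := (idealGen P ({i, j} : Set (Fin n))).ncard with hm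
      have hwv : posetWeight P w = m := by
        rw [hw, hwt v]
        unfold posetWeight
        rw [hv, hei, hejdef, supp_pair hij]
      have hwk : (idealGen P ({k} : Set (Fin n))).ncard = m := by
        have hh : posetWeight P w = (idealGen P ({k} : Set (Fin n))).ncard := by
          unfold posetWeight
          rw [hk]
        exact hh.symm.trans hwv
      -- the two strict inequalities
      have hideal_i : IsPosetIdeal P {t | P.le t i} := fun a ha b hba => P.le_trans b a i hba ha
      have hideal_j : IsPosetIdeal P {t | P.le t j} := fun a ha b hba => P.le_trans b a j hba ha
      have hlti : (idealGen P ({i} : Set (Fin n))).ncard < m := by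
        have hsub : idealGen P {i} ⊆ idealGen P {i, j} :=
          idealGen_mono P (by simp)
        have hjmem : j ∈ idealGen P ({i, j} : Set (Fin n)) :=
          subset_idealGen P _ (by simp)
        have hjnot : j ∉ idealGen P ({i} : Set (Fin n)) := by
          intro hmem
          have hsub2 : idealGen P ({i} : Set (Fin n)) ⊆ {t | P.le t i} :=
            idealGen_subset P hideal_i (by
              intro x hx
              simp only [Set.mem_singleton_iff] at hx
              rw [Set.mem_setOf_eq, hx]
              exact P.le_refl i)
          exact hPji (hsub2 hmem)
        exact Set.ncard_lt_ncard
          (hsub.ssubset_of_ne fun he => hjnot (he ▸ hjmem)) (Set.toFinite _)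
      have hltj : (idealGen P ({j} : Set (Fin n))).ncard < m := by
        have hsub : idealGen P {j} ⊆ idealGen P {i, j} :=
          idealGen_mono P (by simp)
        have himem : i ∈ idealGen P ({i, j} : Set (Fin n)) :=
          subset_idealGen P _ (by simp)
        have hinot : i ∉ idealGen P ({j} : Set (Fin n)) := by
          intro hmem
          have hsub2 : idealGen P ({j} : Set (Fin n)) ⊆ {t | P.le t j} :=
            idealGen_subset P hideal_j (by
              intro x hx
              simp only [Set.mem_singleton_iff] at hx
              rw [Set.mem_setOf_eq, hx]
              exact P.le_refl j)
          exact hPij (hsub2 hmem)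
        exact Set.ncard_lt_ncard
          (hsub.ssubset_of_ne fun he => hinot (he ▸ himem)) (Set.toFinite _)
      -- u + z2 = w with small weights
      set u : Fin n → F := d'.T ei with hu
      set z2 : Fin n → F := d'.T ej with hz2
      have haddw : u + z2 = w := by
        rw [hu, hz2, hw, hv, map_add]
      have hwu : posetWeight P u = (idealGen P ({i} : Set (Fin n))).ncard := by
        rw [hu, hwt ei]
        unfold posetWeight
        rw [hei, supp_single]
      have hwz2 : posetWeight P z2 = (idealGen P ({j} : Set (Fin n))).ncard := by
        rw [hz2, hwt ej]
        unfold posetWeight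
        rw [hejdef, supp_single]
      have hwkne : w k ≠ 0 := by
        obtain ⟨t, ht⟩ := hnonempty
        have : t ∈ ({k} : Set (Fin n)) := hk ▸ ht
        rwa [Set.mem_singleton_iff.mp this] at ht
      have hcases : u k ≠ 0 ∨ z2 k ≠ 0 := by
        by_contra hboth
        push_neg at hboth
        have := congrFun haddw k
        rw [Pi.add_apply, hboth.1, hboth.2, add_zero] at this
        exact hwkne this.symm
      rcases hcases with hne2 | hne2
      · -- k ∈ supp u, so m ≤ ω(u) < m
        have hsub : idealGen P ({k} : Set (Fin n)) ⊆ idealGen P {t | u t ≠ 0} :=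
          idealGen_mono P (by simpa using hne2)
        have hle1 := Set.ncard_le_ncard hsub (Set.toFinite _)
        have hq : posetWeight P u = (idealGen P {t | u t ≠ 0}).ncard := rfl
        have hle2 : m ≤ (idealGen P ({i} : Set (Fin n))).ncard := by
          rw [← hwk, ← hwu, hq]
          exact hle1
        exact absurd hlti (not_lt.mpr hle2)
      · have hsub : idealGen P ({k} : Set (Fin n)) ⊆ idealGen P {t | z2 t ≠ 0} :=
          idealGen_mono P (by simpa using hne2)
        have hle1 := Set.ncard_le_ncard hsub (Set.toFinite _)
        have hq : posetWeight P z2 = (idealGen P {t | z2 t ≠ 0}).ncard := rfl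
        have hle2 : m ≤ (idealGen P ({j} : Set (Fin n))).ncard := by
          rw [← hwk, ← hwz2, hq]
          exact hle1
        exact absurd hltj (not_lt.mpr hle2)
    calc Fintype.card F ^ (2 - 1) ≤ Fintype.card F ^ ((suppS d'.C').ncard - 1) := by
          exact Nat.pow_le_pow_right Fintype.card_pos (Nat.sub_le_sub_right hs2 1)
      _ = _ := rfl
  · -- the partitions
    refine ⟨⟨{j}ᶜ, {{j}}, ?_, ?_, ?_, ?_⟩, ⟨({i, j} : Finset (Fin n))ᶜ, {{i, j}}, ?_, ?_, ?_, ?_⟩,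
        ?_⟩
    · intro J hJ
      rw [Finset.mem_singleton] at hJ
      exact hJ ▸ ⟨j, Finset.mem_singleton_self j⟩
    · intro J hJ
      rw [Finset.mem_singleton] at hJ
      exact hJ ▸ disjoint_compl_left
    · intro J hJ K hK hJK
      rw [Finset.mem_singleton] at hJ hK
      exact absurd (hJ.trans hK.symm) hJK
    · rw [Finset.sup_singleton]
      ext t
      by_cases h : t = j <;> simp [h]
    · intro J hJ
      rw [Finset.mem_singleton] at hJ
      exact hJ ▸ ⟨i, by simp⟩
    · intro J hJ
      rw [Finset.mem_singleton] at hJ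
      exact hJ ▸ disjoint_compl_left
    · intro J hJ K hK hJK
      rw [Finset.mem_singleton] at hJ hK
      exact absurd (hJ.trans hK.symm) hJK
    · rw [Finset.sup_singleton]
      ext t
      by_cases h1 : t = i <;> by_cases h2 : t = j <;> simp [h1, h2]
    -- pq' := pq, φ := identity
    refine ⟨⟨{j}ᶜ, {{j}}, ?_, ?_, ?_, ?_⟩, Equiv.refl _, ⟨?_, ?_⟩, ⟨?_, ?_⟩, ?_, ?_, ?_⟩
    · intro J hJ
      rw [Finset.mem_singleton] at hJ
      exact hJ ▸ ⟨j, Finset.mem_singleton_self j⟩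
    · intro J hJ
      rw [Finset.mem_singleton] at hJ
      exact hJ ▸ disjoint_compl_left
    · intro J hJ K hK hJK
      rw [Finset.mem_singleton] at hJ hK
      exact absurd (hJ.trans hK.symm) hJK
    · rw [Finset.sup_singleton]
      ext t
      by_cases h : t = j <;> simp [h]
    · -- induced partition of dQ : J0
      show (↑({j}ᶜ : Finset (Fin n)) : Set (Fin n)) = (suppS Cj)ᶜ
      rw [hsuppCj]
      simp
    · -- induced partition of dQ : parts
      intro s
      constructor
      · intro hs
        rw [Finset.mem_singleton] at hs
        refine ⟨⟨0, Nat.one_pos⟩, ?_⟩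
        show (↑s : Set (Fin n)) = suppS Cj
        rw [hs, hsuppCj, Finset.coe_singleton]
      · rintro ⟨i0, h⟩
        have h' : (↑s : Set (Fin n)) = suppS Cj := h
        rw [hsuppCj] at h'
        rw [Finset.mem_singleton]
        exact Finset.coe_injective (h'.trans (Finset.coe_singleton j).symm)
    · -- induced partition of dP : J0
      show (↑(({i, j} : Finset (Fin n))ᶜ : Finset (Fin n)) : Set (Fin n)) = (suppS C)ᶜ
      rw [hsuppC, Finset.coe_compl]
      congr 1
      simp
    · -- induced partition of dP : parts
      intro s
      constructor
      · intro hs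
        rw [Finset.mem_singleton] at hs
        refine ⟨⟨0, Nat.one_pos⟩, ?_⟩
        show (↑s : Set (Fin n)) = suppS C
        rw [hs, hsuppC]
        simp
      · rintro ⟨i0, h⟩
        have h' : (↑s : Set (Fin n)) = suppS C := h
        rw [hsuppC] at h'
        rw [Finset.mem_singleton]
        apply Finset.coe_injective
        rw [h']
        simp
    · simp
    · simp
    · -- strict refinement: one aggregate step
      apply Relation.TransGen.single
      right
      refine ⟨{i, j}, Finset.mem_singleton_self _, {i},
        ⟨i, Finset.mem_singleton_self i⟩, ?_, ?_, ?_⟩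
      · rw [Finset.ssubset_def]
        constructor
        · intro t ht
          rw [Finset.mem_singleton] at ht
          rw [ht]
          simp
        · intro hsub
          have hjj := hsub (by simp : j ∈ ({i, j} : Finset (Fin n)))
          rw [Finset.mem_singleton] at hjj
          exact hij hjj.symm
      · show ({j}ᶜ : Finset (Fin n)) = ({i, j} : Finset (Fin n))ᶜ ∪ {i}
        ext t
        rcases eq_or_ne t i with rfl | h1
        · simp [hij]
        · rcases eq_or_ne t j with rfl | h2
          · simp [h1]
          · simp [h1, h2]
      · show ({{j}} : Finset (Finset (Fin n))) =
          insert (({i, j} : Finset (Fin n)) \ {i}) (({{i, j}} : Finset (Finset (Fin n))).erase {i, j})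
        rw [Finset.erase_singleton]
        have hd : ({i, j} : Finset (Fin n)) \ {i} = {j} := by
          ext t
          rcases eq_or_ne t i with rfl | h1
          · simp [hij]
          · rcases eq_or_ne t j with rfl | h2
            · simp [h1]
            · simp [h1, h2]
        rw [hd]
        simp
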